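/- Let n ≥ 2, let τ₁ < ⋯ < τₙ be real numbers, set dₖ = τ_{k+1} − τₖ, and let ζ > 0 satisfy ζ < (min_{1≤k≤n−1} dₖ)/2. Suppose μ₁*, …, μₙ* are real numbers with |μₖ* − τₖ| < ζ for all k. Then for every non-identity permutation π of {1,…,n}, ∑ₖ (μₖ* − τₖ)² < ∑ₖ (μ_{π(k)}* − τₖ)². -/
import Mathlib


open Finset

/-- Lemma 2 of the paper: if each `μ k` lies within `ζ` of `τ k`, where `2ζ` is less
than every consecutive gap of the strictly increasing `τ`, then the identity matching
strictly minimizes the sum of squared deviations over all permutations. -/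
theorem stmt_1 (n : ℕ) (hn : 2 ≤ n) (τ μ : Fin n → ℝ) (hτ : StrictMono τ)
    (ζ : ℝ) (hζ : 0 < ζ)
    (hgap : ∀ k : Fin n, ∀ h : (k : ℕ) + 1 < n, 2 * ζ < τ ⟨(k : ℕ) + 1, h⟩ - τ k)
    (hμ : ∀ k : Fin n, |μ k - τ k| < ζ)
    (π : Equiv.Perm (Fin n)) (hπ : π ≠ 1) :
    ∑ k : Fin n, (μ k - τ k) ^ 2 < ∑ k : Fin n, (μ (π k) - τ k) ^ 2 := by
  -- Separation of τ values: distinct indices are more than 2ζ apart.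
  have hsep : ∀ i j : Fin n, i < j → 2 * ζ < τ j - τ i := by
    intro i j hij
    have h1 : (i : ℕ) + 1 < n := lt_of_le_of_lt (Nat.succ_le_of_lt hij) j.isLt
    have h2 : τ (⟨(i : ℕ) + 1, h1⟩ : Fin n) ≤ τ j := by
      apply hτ.monotone
      exact Nat.succ_le_of_lt hij
    have := hgap i h1
    linarith
  have hsep' : ∀ i j : Fin n, i ≠ j → 2 * ζ < |τ i - τ j| := by
    intro i j hij
    rcases lt_or_gt_of_ne hij with h | h
    · rw [abs_sub_comm, abs_of_pos (by linarith [hsep i j h] : (0:ℝ) < τ j - τ i)]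
      exact hsep i j h
    · rw [abs_of_pos (by linarith [hsep j i h] : (0:ℝ) < τ i - τ j)]
      exact hsep j i h
  -- Key: if π k ≠ k, the shifted residual is larger than ζ.
  have key : ∀ k : Fin n, π k ≠ k → ζ < |μ (π k) - τ k| := by
    intro k hk
    have h1 := hsep' (π k) k hk
    have h2 := hμ (π k)
    have h3 : |τ (π k) - τ k| ≤ |τ (π k) - μ (π k)| + |μ (π k) - τ k| :=
      abs_sub_le _ _ _
    rw [abs_sub_comm] at h2
    linarith
  have hle : ∀ k ∈ Finset.univ, (μ k - τ k) ^ 2 ≤ (μ (π k) - τ k) ^ 2 := by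
    intro k _
    by_cases hk : π k = k
    · rw [hk]
    · have h1 : |μ k - τ k| < |μ (π k) - τ k| := lt_trans (hμ k) (key k hk)
      calc (μ k - τ k) ^ 2 = |μ k - τ k| ^ 2 := (sq_abs _).symm
        _ ≤ |μ (π k) - τ k| ^ 2 := by nlinarith [abs_nonneg (μ k - τ k)]
        _ = (μ (π k) - τ k) ^ 2 := sq_abs _
  obtain ⟨k, hk⟩ : ∃ k : Fin n, π k ≠ k := by
    by_contra h
    push_neg at h
    exact hπ (Equiv.ext h)
  refine Finset.sum_lt_sum hle ⟨k, Finset.mem_univ k, ?_⟩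
  have h1 : |μ k - τ k| < |μ (π k) - τ k| := lt_trans (hμ k) (key k hk)
  calc (μ k - τ k) ^ 2 = |μ k - τ k| ^ 2 := (sq_abs _).symm
    _ < |μ (π k) - τ k| ^ 2 := by nlinarith [abs_nonneg (μ k - τ k)]
    _ = (μ (π k) - τ k) ^ 2 := sq_abs _
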